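/- arXiv:1908.09491 — 2 statements merged into one kernel-verified Lean document; each statement's English description precedes it below -/
import Mathlib

section
/- Let F be an entire function and z_1 ∈ ℂ a point with F(z_1) ≠ 0, and define the entire function Φ(z) = (1/2)(F(z_1 + iz)/F(z_1) + conj(F(z_1 + i·conj(z)))/conj(F(z_1))). Then for all 0 < T < R, the number n(T, Φ) of zeros of Φ, counted with multiplicity, in the closed disc {z : |z| ≤ T} satisfies n(T, Φ) ≤ (max_{|ζ| ≤ R} log|F(z_1 + iζ)| − log|F(z_1)|)/log(R/T). -/
/-!
`Φ(0) = 1`, and on `|z| = R` both terms of `Φ` are bounded by `max_{|ζ| ≤ R} |F(z₁ + iζ)| / |F(z₁)|`,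
because the disc `|ζ| ≤ R` is invariant under conjugation. Jensen's inequality for `Φ` on the
discs of radii `T < R` then bounds `n(T, Φ) log (R / T)` by the logarithm of this maximum.
-/

open Complex Metric Set MeromorphicOn

theorem AnalyticOnNhd.finsum_mem_analyticOrderAt_toNat_eq_divisor {𝕜 E : Type*}
    [NontriviallyNormedField 𝕜] [NormedAddCommGroup E] [NormedSpace 𝕜 E] {f : 𝕜 → E} {U : Set 𝕜}
    (hf : AnalyticOnNhd 𝕜 f U) (hU : IsCompact U) :
    ∑ᶠ z ∈ U, ((analyticOrderAt f z).toNat : ℝ) = ((∑ᶠ z, divisor f U z : ℤ) : ℝ) := by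
  rw [← eq_intCast (Int.castRingHom ℝ),
    map_finsum _ ((divisor f U).finiteSupport hU), finsum_mem_def]
  refine finsum_congr fun z => ?_
  by_cases hz : z ∈ U
  · cases h : analyticOrderAt f z <;> simp [hz, hf.divisor_apply hz, h]
  · simp [hz]

theorem norm_le_exp_sSup_log_norm {X E : Type*} [TopologicalSpace X] [SeminormedAddCommGroup E]
    {g : X → E} {K : Set X} (hK : IsCompact K) (hg : ContinuousOn g K) {x : X} (hx : x ∈ K) :
    ‖g x‖ ≤ Real.exp (sSup ((fun y => Real.log ‖g y‖) '' K)) := by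
  have hbdd : BddAbove ((fun y => Real.log ‖g y‖) '' K) := by
    obtain ⟨B, hB⟩ := (hK.image_of_continuousOn hg.norm).bddAbove
    refine ⟨B, ?_⟩
    rintro _ ⟨y, hy, rfl⟩
    exact (Real.log_le_self (norm_nonneg _)).trans (hB (mem_image_of_mem _ hy))
  calc ‖g x‖ ≤ Real.exp (Real.log ‖g x‖) := Real.le_exp_log _
    _ ≤ _ := Real.exp_le_exp.2 (le_csSup hbdd (mem_image_of_mem _ hx))

theorem norm_half_mul_div_add_conj_div_le {a b c : ℂ} {B : ℝ} (ha : ‖a‖ ≤ B) (hb : ‖b‖ ≤ B) :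
    ‖(1 / 2) * (a / c + starRingEnd ℂ b / starRingEnd ℂ c)‖ ≤ B / ‖c‖ := by
  calc ‖(1 / 2) * (a / c + starRingEnd ℂ b / starRingEnd ℂ c)‖
      ≤ (1 / 2) * (‖a‖ / ‖c‖ + ‖b‖ / ‖c‖) := by
        rw [norm_mul, norm_div, norm_one, Complex.norm_two]
        gcongr
        refine (norm_add_le _ _).trans_eq ?_
        rw [norm_div, norm_div, Complex.norm_conj, Complex.norm_conj]
    _ ≤ (1 / 2) * (B / ‖c‖ + B / ‖c‖) := by gcongr
    _ = B / ‖c‖ := by ring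

/-- The number of zeros (with multiplicity) of the auxiliary function `Φ` from
Backlund's lemma in `|z| ≤ T` is bounded by
`(max_{|ζ| ≤ R} log |F(z₁ + iζ)| - log |F(z₁)|) / log (R / T)` for `0 < T < R`. -/
theorem phi_zero_count (F : ℂ → ℂ) (hF : Differentiable ℂ F)
    (z₁ : ℂ) (hz₁ : F z₁ ≠ 0)
    (Φ : ℂ → ℂ)
    (hΦ : ∀ z : ℂ, Φ z = (1 / 2) *
      (F (z₁ + Complex.I * z) / F z₁
        + (starRingEnd ℂ) (F (z₁ + Complex.I * (starRingEnd ℂ z)))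
            / (starRingEnd ℂ) (F z₁)))
    (hΦd : Differentiable ℂ Φ)
    (T R : ℝ) (hT : 0 < T) (hTR : T < R) :
    (∑ᶠ z ∈ Metric.closedBall (0 : ℂ) T, (((analyticOrderAt Φ z).toNat : ℝ)))
      ≤ (sSup ((fun ζ : ℂ => Real.log ‖F (z₁ + Complex.I * ζ)‖) ''
            Metric.closedBall (0 : ℂ) R)
          - Real.log ‖F z₁‖) / Real.log (R / T) := by
  have hR : 0 < R := hT.trans hTR
  set S := sSup ((fun ζ : ℂ => Real.log ‖F (z₁ + Complex.I * ζ)‖) '' closedBall (0 : ℂ) R)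
  have hF_le : ∀ ζ ∈ closedBall (0 : ℂ) R, ‖F (z₁ + I * ζ)‖ ≤ Real.exp S := fun ζ hζ =>
    norm_le_exp_sSup_log_norm (g := fun ζ => F (z₁ + I * ζ)) (isCompact_closedBall 0 R)
      (hF.continuous.comp (by fun_prop)).continuousOn hζ
  have hΦ0 : Φ 0 = 1 := by norm_num [hΦ, hz₁]
  have hΦ_le : ∀ z ∈ sphere (0 : ℂ) |R|, ‖Φ z‖ ≤ Real.exp S / ‖F z₁‖ := by
    intro z hz
    rw [abs_of_pos hR] at hz
    rw [hΦ]
    exact norm_half_mul_div_add_conj_div_le (hF_le z (sphere_subset_closedBall hz))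
      (hF_le _ (by simpa using sphere_subset_closedBall hz))
  have hM : 1 ≤ Real.exp S / ‖F z₁‖ :=
    (one_le_div (norm_pos_iff.2 hz₁)).2 (by simpa using hF_le 0 (mem_closedBall_self hR.le))
  have jensen := AnalyticOnNhd.sum_divisor_le (c := 0) (by rwa [abs_of_pos hT])
    (by rwa [abs_of_pos hT, abs_of_pos hR]) hM (fun z _ => hΦd.analyticAt z) (by simp [hΦ0]) hΦ_le
  rwa [abs_of_pos hT, hΦ0, norm_one, div_one,
    Real.log_div (Real.exp_pos S).ne' (norm_ne_zero_iff.2 hz₁), Real.log_exp,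
    ← AnalyticOnNhd.finsum_mem_analyticOrderAt_toNat_eq_divisor (fun z _ => hΦd.analyticAt z)
      (isCompact_closedBall 0 T)] at jensen
end

section
/- Let f(z) = 1 + H_1 e^{w_1 z} + ... + H_n e^{w_n z} be a normalized exponential sum, set H_0 = 1, w_0 = 0, and suppose x_1 < x_2 are real numbers and j, k ∈ {0, 1, ..., n} are indices such that |H_j| e^{w_j x_1} > Σ_{l ≠ j} |H_l| e^{w_l x_1} and |H_k| e^{w_k x_2} > Σ_{l ≠ k} |H_l| e^{w_l x_2}. Then there exists a constant C > 0 such that for every y ∈ ℝ for which f has no zeros on the horizontal segment {t + iy : x_1 ≤ t ≤ x_2}, |Re{(1/(2πi)) ∫_{x_1 + iy}^{x_2 + iy} f'(z)/f(z) dz}| ≤ C, where the integral is taken along that horizontal segment. -/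
/-!
Along the segment, `Re f (t + iy)` is a real exponential sum in `t` with `n + 1` distinct
frequencies (its coefficients depend on `y`). Pólya's Rolle argument (divide by one exponential
and differentiate) shows that such a sum with `n + 1` real zeros vanishes identically.

On the other hand, if `L` is the primitive of `f'/f` along the segment, then
`f = f(x₁ + iy) exp L`, so `Re f` vanishes wherever `cos (arg f(x₁ + iy) + Im L)` does.
If `|Im L|` reached `π (n + 2)` at the end of the segment, `Re f` would have `n + 1` zeros on it
and still be nonzero at some point. Hence `|Im ∫ f'/f| < π (n + 2)` for every `y`.
-/

open Complex intervalIntegral Finset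

open Set
open scoped Real

theorem exists_strictMono_hasDerivAt_eq_zero {h h' : ℝ → ℝ}
    (hh : ∀ x, HasDerivAt h (h' x) x) {m : ℕ} {t : Fin (m + 1) → ℝ} (ht : StrictMono t)
    (hzero : ∀ i, h (t i) = 0) :
    ∃ r : Fin m → ℝ, StrictMono r ∧ ∀ i, h' (r i) = 0 := by
  have rolle : ∀ i : Fin m, ∃ r ∈ Ioo (t i.castSucc) (t i.succ), h' r = 0 := fun i =>
    exists_hasDerivAt_eq_zero (ht Fin.castSucc_lt_succ)
      (fun x _ => (hh x).continuousAt.continuousWithinAt) (by rw [hzero, hzero]) fun x _ => hh x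
  choose r hr hr' using rolle
  refine ⟨r, fun i j hij => ?_, hr'⟩
  calc r i < t i.succ := (hr i).2
    _ ≤ t j.castSucc := ht.monotone (Fin.succ_le_castSucc_iff.mpr hij)
    _ < r j := (hr j).1

noncomputable def expSum {ι : Type*} (s : Finset ι) (c μ : ι → ℝ) (x : ℝ) : ℝ :=
  ∑ i ∈ s, c i * Real.exp (μ i * x)

section ExpSum

variable {ι : Type*} {s : Finset ι} {c μ : ι → ℝ}

theorem hasDerivAt_expSum (x : ℝ) :
    HasDerivAt (expSum s c μ) (expSum s (fun i => c i * μ i) μ x) x := by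
  unfold expSum
  refine HasDerivAt.fun_sum fun i _ => ?_
  simpa [mul_comm, mul_left_comm, mul_assoc] using
    (((hasDerivAt_id x).const_mul (μ i)).exp).const_mul (c i)

theorem expSum_sub_const (a x : ℝ) :
    expSum s c (fun i => μ i - a) x = Real.exp (-(a * x)) * expSum s c μ x := by
  simp only [expSum, mul_sum]
  refine sum_congr rfl fun i _ => ?_
  rw [mul_left_comm, ← Real.exp_add]
  ring_nf

theorem expSum_coeff_eq_zero_of_strictMono_zeros (hμ : InjOn μ s) {m : ℕ} (hs : s.card ≤ m)
    {t : Fin m → ℝ} (ht : StrictMono t) (hzero : ∀ i, expSum s c μ (t i) = 0) :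
    ∀ i ∈ s, c i = 0 := by
  classical
  induction m generalizing s c μ with
  | zero => simp_all
  | succ m ih =>
    intro p hp
    -- Dividing by `exp (μ p * x)` and differentiating kills the `p`-th term.
    have hzero' : ∀ i, expSum s c (fun i => μ i - μ p) (t i) = 0 := fun i => by
      rw [expSum_sub_const, hzero, mul_zero]
    obtain ⟨r, hr, hr'⟩ := exists_strictMono_hasDerivAt_eq_zero hasDerivAt_expSum ht hzero'
    have hderiv : ∀ x, expSum s (fun i => c i * (μ i - μ p)) (fun i => μ i - μ p) x =
        expSum (s.erase p) (fun i => c i * (μ i - μ p)) (fun i => μ i - μ p) x := fun x =>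
      (sum_erase s (by simp)).symm
    have hμ' : InjOn (fun i => μ i - μ p) (s.erase p) := fun i hi j hj hij =>
      hμ (mem_of_mem_erase hi) (mem_of_mem_erase hj) (by simpa using hij)
    have herase : ∀ i ∈ s.erase p, c i * (μ i - μ p) = 0 :=
      ih hμ' (by rw [card_erase_of_mem hp]; omega) hr fun i => by rw [← hderiv, hr']
    have hc : ∀ i ∈ s.erase p, c i = 0 := fun i hi =>
      (mul_eq_zero.mp (herase i hi)).resolve_right
        (sub_ne_zero.mpr fun h => (ne_of_mem_erase hi) (hμ (mem_of_mem_erase hi) hp h))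
    have h0 := hzero 0
    rw [expSum, ← add_sum_erase s _ hp, sum_eq_zero fun i hi => by rw [hc i hi, zero_mul],
      add_zero] at h0
    exact (mul_eq_zero.mp h0).resolve_right (Real.exp_ne_zero _)

theorem expSum_coeff_eq_zero_of_card_le_zeros (hμ : InjOn μ s) {T : Finset ℝ}
    (hT : s.card ≤ T.card) (hzero : ∀ x ∈ T, expSum s c μ x = 0) : ∀ i ∈ s, c i = 0 :=
  expSum_coeff_eq_zero_of_strictMono_zeros hμ hT (T.orderEmbOfFin rfl).strictMono
    fun i => hzero _ (T.orderEmbOfFin_mem rfl i)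

end ExpSum

theorem re_sum_mul_cexp_eq_expSum {ι : Type*} (s : Finset ι) (A : ι → ℂ) (ν : ι → ℝ)
    (z : ℂ) (d u : ℝ) :
    (∑ i ∈ s, A i * cexp (ν i * (z + u * d))).re =
      expSum s (fun i => (A i * cexp (ν i * z)).re) (fun i => ν i * d) u := by
  simp only [expSum, re_sum]
  refine sum_congr rfl fun i _ => ?_
  have hreal : (ν i : ℂ) * (u * d) = ((ν i * d * u : ℝ) : ℂ) := by push_cast; ring
  rw [mul_add, Complex.exp_add, ← mul_assoc, hreal, ← ofReal_exp, re_mul_ofReal]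

theorem exists_injective_cos_eq_zero (α : ℝ) (N : ℕ) :
    ∃ v : Fin N → ℝ, Function.Injective v ∧
      ∀ i, v i ∈ Icc α (α + π * N) ∧ Real.cos (v i) = 0 := by
  set k : ℤ := ⌈α / π - 1 / 2⌉
  have hk₁ : α ≤ (k + 1 / 2) * π := by
    have := Int.le_ceil (α / π - 1 / 2)
    rw [← div_le_iff₀ Real.pi_pos]
    linarith
  have hk₂ : (k + 1 / 2) * π < α + π := by
    have := Int.ceil_lt_add_one (α / π - 1 / 2)
    rw [← lt_div_iff₀ Real.pi_pos, add_div, div_self Real.pi_ne_zero]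
    linarith
  refine ⟨fun i => (k + 1 / 2) * π + i * π, fun i j hij => ?_,
    fun i => ⟨⟨?_, ?_⟩, Real.cos_eq_zero_iff.mpr ⟨k + i, by push_cast; ring⟩⟩⟩
  · simpa [Real.pi_ne_zero, Fin.ext_iff] using hij
  · have : (0 : ℝ) ≤ i * π := by positivity
    dsimp only
    linarith
  · have hi : ((i : ℕ) + 1 : ℝ) * π ≤ N * π :=
      mul_le_mul_of_nonneg_right (by exact_mod_cast i.isLt) Real.pi_pos.le
    dsimp only
    linarith

theorem exists_cos_ne_zero_mem_Icc (α : ℝ) : ∃ v ∈ Icc α (α + π), Real.cos v ≠ 0 := by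
  set k : ℤ := ⌈α / π⌉
  refine ⟨k * π, ⟨?_, ?_⟩, fun h => ?_⟩
  · rw [← div_le_iff₀ Real.pi_pos]
    exact Int.le_ceil _
  · have := Int.ceil_lt_add_one (α / π)
    rw [← le_div_iff₀ Real.pi_pos, add_div, div_self Real.pi_ne_zero]
    exact this.le
  · have := Real.sin_sq_add_cos_sq (k * π)
    rw [Real.sin_int_mul_pi, h] at this
    norm_num at this

theorem exists_cos_eq_zero_of_le_abs_sub {ψ : ℝ → ℝ} {a b : ℝ} (hab : a ≤ b)
    (hψ : ContinuousOn ψ (Icc a b)) {N : ℕ} (hN : π * (N + 1) ≤ |ψ b - ψ a|) :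
    (∃ T : Finset ℝ, T.card = N ∧ ∀ x ∈ T, x ∈ Icc a b ∧ Real.cos (ψ x) = 0) ∧
      ∃ x ∈ Icc a b, Real.cos (ψ x) ≠ 0 := by
  set α := min (ψ a) (ψ b)
  have himage : Icc α (α + π * (N + 1)) ⊆ ψ '' Icc a b := by
    have := intermediate_value_uIcc (uIcc_of_le hab ▸ hψ)
    rw [uIcc_of_le hab] at this
    refine Subset.trans (Icc_subset_Icc_right ?_) this
    rw [← abs_sub_comm, ← max_sub_min_eq_abs'] at hN
    linarith
  obtain ⟨v, hv, hvzero⟩ := exists_injective_cos_eq_zero α N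
  have hpre : ∀ i, ∃ x ∈ Icc a b, ψ x = v i := fun i =>
    himage (Icc_subset_Icc_right (by nlinarith [Real.pi_pos]) (hvzero i).1)
  choose x hx hψx using hpre
  have hxinj : Function.Injective x := fun i j hij => hv (by rw [← hψx, ← hψx, hij])
  obtain ⟨v', hv'Icc, hv'cos⟩ := exists_cos_ne_zero_mem_Icc α
  obtain ⟨x', hx', hψx'⟩ := himage (Icc_subset_Icc_right (by nlinarith [Real.pi_pos]) hv'Icc)
  refine ⟨⟨univ.image x, ?_, ?_⟩, x', hx', hψx' ▸ hv'cos⟩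
  · rw [card_image_of_injective _ hxinj, card_univ, Fintype.card_fin]
  · intro y hy
    obtain ⟨i, -, rfl⟩ := mem_image.mp hy
    exact ⟨hx i, hψx i ▸ (hvzero i).2⟩

section LogarithmicIntegral

variable {g g' : ℝ → ℂ} {a b : ℝ}

theorem hasDerivAt_integral_div (hg : ∀ x, HasDerivAt g (g' x) x) (hg' : Continuous g')
    (hne : ∀ x ∈ Icc a b, g x ≠ 0) {x : ℝ} (hx : x ∈ Icc a b) :
    HasDerivAt (fun u => ∫ t in a..u, g' t / g t) (g' x / g x) x := by
  have hgc : Continuous g := continuous_iff_continuousAt.mpr fun x => (hg x).continuousAt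
  have hU : IsOpen {t | g t ≠ 0} := isOpen_ne_fun hgc continuous_const
  have hF : ContinuousOn (fun t => g' t / g t) {t | g t ≠ 0} :=
    hg'.continuousOn.div hgc.continuousOn fun _ ht => ht
  have hsub : uIcc a x ⊆ {t | g t ≠ 0} := by
    rw [uIcc_of_le hx.1]
    exact fun t ht => hne t ⟨ht.1, ht.2.trans hx.2⟩
  exact integral_hasDerivAt_right (hF.mono hsub).intervalIntegrable
    (hF.stronglyMeasurableAtFilter hU x (hne x hx))
    (hF.continuousAt (hU.mem_nhds (hne x hx)))

theorem eq_mul_exp_integral_div (hg : ∀ x, HasDerivAt g (g' x) x) (hg' : Continuous g')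
    (hne : ∀ x ∈ Icc a b, g x ≠ 0) {u : ℝ} (hu : u ∈ Icc a b) :
    g u = g a * exp (∫ t in a..u, g' t / g t) := by
  set L : ℝ → ℂ := fun u => ∫ t in a..u, g' t / g t
  have hφ : ∀ x ∈ Icc a b, HasDerivAt (fun u => g u * exp (-L u)) 0 x := fun x hx => by
    refine ((hg x).mul (hasDerivAt_integral_div hg hg' hne hx).neg.cexp).congr_deriv ?_
    field_simp [hne x hx]
    ring
  have hconst := constant_of_has_deriv_right_zero
    (fun x hx => (hφ x hx).continuousAt.continuousWithinAt)
    (fun x hx => (hφ x (Ico_subset_Icc_self hx)).hasDerivWithinAt) u hu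
  simp only [L, integral_same, neg_zero, Complex.exp_zero, mul_one] at hconst
  rw [← hconst, mul_assoc, ← Complex.exp_add, neg_add_cancel, Complex.exp_zero, mul_one]

theorem exists_re_eq_zero_of_le_abs_im_integral_div (hab : a ≤ b)
    (hg : ∀ x, HasDerivAt g (g' x) x) (hg' : Continuous g') (hne : ∀ x ∈ Icc a b, g x ≠ 0)
    {N : ℕ} (hN : π * (N + 1) ≤ |(∫ t in a..b, g' t / g t).im|) :
    (∃ T : Finset ℝ, T.card = N ∧ ∀ x ∈ T, x ∈ Icc a b ∧ (g x).re = 0) ∧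
      ∃ x ∈ Icc a b, (g x).re ≠ 0 := by
  set L : ℝ → ℂ := fun u => ∫ t in a..u, g' t / g t
  set ψ : ℝ → ℝ := fun u => arg (g a) + (L u).im
  have hre : ∀ u ∈ Icc a b, (g u).re = ‖g a‖ * Real.exp (L u).re * Real.cos (ψ u) := by
    intro u hu
    rw [eq_mul_exp_integral_div hg hg' hne hu, ← norm_mul_exp_arg_mul_I (g a), mul_assoc,
      ← Complex.exp_add, re_ofReal_mul, Complex.exp_re]
    simp [ψ, L, mul_assoc]
  have hre_eq_zero : ∀ u ∈ Icc a b, (g u).re = 0 ↔ Real.cos (ψ u) = 0 := fun u hu => by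
    simp [hre u hu, hne a ⟨le_rfl, hab⟩, Real.exp_ne_zero]
  have hψ : ContinuousOn ψ (Icc a b) := fun x hx =>
    (continuous_im.continuousAt.comp (hasDerivAt_integral_div hg hg' hne hx).continuousAt
      |>.const_add _).continuousWithinAt
  have hψab : ψ b - ψ a = (L b).im := by simp [ψ, L]
  obtain ⟨⟨T, hT, hTzero⟩, x, hx, hxne⟩ :=
    exists_cos_eq_zero_of_le_abs_sub hab hψ (hψab ▸ hN)
  refine ⟨⟨T, hT, fun y hy => ?_⟩, x, hx, fun h => hxne ((hre_eq_zero x hx).mp h)⟩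
  obtain ⟨hyIcc, hycos⟩ := hTzero y hy
  exact ⟨hyIcc, (hre_eq_zero y hyIcc).mpr hycos⟩

theorem abs_im_integral_div_lt_of_re_eq_expSum {ι : Type*} {s : Finset ι} {c μ : ι → ℝ}
    (hμ : InjOn μ s) (hab : a ≤ b) (hg : ∀ x, HasDerivAt g (g' x) x) (hg' : Continuous g')
    (hne : ∀ x ∈ Icc a b, g x ≠ 0) (hre : ∀ x ∈ Icc a b, (g x).re = expSum s c μ x) :
    |(∫ t in a..b, g' t / g t).im| < π * (s.card + 1) := by
  by_contra! hle
  obtain ⟨⟨T, hT, hTzero⟩, x, hx, hxne⟩ :=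
    exists_re_eq_zero_of_le_abs_im_integral_div hab hg hg' hne hle
  have hc := expSum_coeff_eq_zero_of_card_le_zeros hμ hT.ge fun y hy =>
    hre y (hTzero y hy).1 ▸ (hTzero y hy).2
  exact hxne (by rw [hre x hx, expSum, sum_eq_zero fun i hi => by rw [hc i hi, zero_mul]])

end LogarithmicIntegral

theorem re_one_div_two_pi_I_mul (z : ℂ) : (1 / (2 * π * I) * z).re = z.im / (2 * π) := by
  rw [one_div, mul_inv, inv_I]
  simp [div_eq_inv_mul]

theorem horizontal_log_integral_bounded_general {n : ℕ}
    (H : Fin (n + 1) → ℂ) (w : Fin (n + 1) → ℝ)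
    (hw : StrictMono w)
    (f : ℂ → ℂ)
    (hf : ∀ z : ℂ, f z = ∑ j : Fin (n + 1), H j * Complex.exp (w j * z))
    (x₁ x₂ : ℝ) (hx : x₁ < x₂) (j : Fin (n + 1)) :
    ∃ C : ℝ, 0 < C ∧ ∀ y : ℝ,
      (∀ t : ℝ, x₁ ≤ t → t ≤ x₂ → f ((t : ℂ) + y * Complex.I) ≠ 0) →
      |((1 / (2 * Real.pi * Complex.I)) *
          ∫ t in (0:ℝ)..1,
            (deriv f ((x₁ : ℂ) + y * Complex.I + t * ((x₂ : ℝ) - x₁))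
                / f ((x₁ : ℂ) + y * Complex.I + t * ((x₂ : ℝ) - x₁)))
              * (((x₂ : ℝ) - x₁ : ℝ) : ℂ)).re| ≤ C := by
  refine ⟨(n + 2) / 2, by positivity, fun y hy => ?_⟩
  set γ : ℝ → ℂ := fun t => (x₁ : ℂ) + y * I + t * ((x₂ : ℝ) - x₁)
  have hfd : Differentiable ℂ f := by rw [funext hf]; fun_prop
  have hg : ∀ t, HasDerivAt (f ∘ γ) (deriv f (γ t) * (x₂ - x₁ : ℝ)) t := fun t => by
    refine (hfd (γ t)).hasDerivAt.comp t ?_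
    simpa [γ] using ((hasDerivAt_id t).ofReal_comp.mul_const ((x₂ : ℂ) - x₁)).const_add
      ((x₁ : ℂ) + y * I)
  have hg' : Continuous fun t => deriv f (γ t) * (x₂ - x₁ : ℝ) :=
    ((hfd.contDiff.continuous_deriv le_rfl).comp (by fun_prop)).mul continuous_const
  have hne : ∀ t ∈ Icc (0 : ℝ) 1, (f ∘ γ) t ≠ 0 := fun t ht => by
    have : γ t = ((x₁ + t * (x₂ - x₁) : ℝ) : ℂ) + y * I := by push_cast; ring
    rw [Function.comp_apply, this]
    exact hy _ (by nlinarith [ht.1]) (by nlinarith [ht.2])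
  have hre : ∀ t ∈ Icc (0 : ℝ) 1, ((f ∘ γ) t).re = expSum univ
      (fun l => (H l * cexp (w l * (x₁ + y * I))).re) (fun l => w l * (x₂ - x₁)) t := by
    intro t _
    have : γ t = (x₁ + y * I) + t * (x₂ - x₁ : ℝ) := by push_cast; ring
    rw [Function.comp_apply, hf, this, re_sum_mul_cexp_eq_expSum]
  have hμ : InjOn (fun l => w l * (x₂ - x₁)) (univ : Finset (Fin (n + 1))) :=
    ((mul_left_injective₀ (sub_ne_zero.mpr hx.ne')).comp hw.injective).injOn
  have hbound := abs_im_integral_div_lt_of_re_eq_expSum hμ zero_le_one hg hg' hne hre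
  rw [card_univ, Fintype.card_fin] at hbound
  have hint : (∫ t in (0:ℝ)..1, deriv f (γ t) / f (γ t) * ((x₂ - x₁ : ℝ) : ℂ)) =
      ∫ t in (0:ℝ)..1, deriv f (γ t) * (x₂ - x₁ : ℝ) / (f ∘ γ) t :=
    integral_congr fun t _ => div_mul_eq_mul_div _ _ _
  rw [hint, re_one_div_two_pi_I_mul, abs_div, abs_of_pos Real.two_pi_pos,
    div_le_iff₀ Real.two_pi_pos]
  convert hbound.le using 1
  push_cast
  ring

/-- The real part of the logarithmic integral of a normalized exponential sum along a
horizontal segment crossing a critical strip (with endpoints in zero-free regions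
dominated by the terms `j` and `k`) is bounded uniformly in the height `y`. -/
theorem horizontal_log_integral_bounded {n : ℕ} (hn : 1 ≤ n)
    (H : Fin (n + 1) → ℂ) (w : Fin (n + 1) → ℝ)
    (hH0 : H 0 = 1) (hw0 : w 0 = 0)
    (hH : ∀ j, H j ≠ 0) (hw : StrictMono w)
    (f : ℂ → ℂ)
    (hf : ∀ z : ℂ, f z = ∑ j : Fin (n + 1), H j * Complex.exp (w j * z))
    (x₁ x₂ : ℝ) (hx : x₁ < x₂) (j k : Fin (n + 1))
    (hdomj : ∑ l ∈ Finset.univ.erase j, ‖H l‖ * Real.exp (w l * x₁)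
        < ‖H j‖ * Real.exp (w j * x₁))
    (hdomk : ∑ l ∈ Finset.univ.erase k, ‖H l‖ * Real.exp (w l * x₂)
        < ‖H k‖ * Real.exp (w k * x₂)) :
    ∃ C : ℝ, 0 < C ∧ ∀ y : ℝ,
      (∀ t : ℝ, x₁ ≤ t → t ≤ x₂ → f ((t : ℂ) + y * Complex.I) ≠ 0) →
      |((1 / (2 * Real.pi * Complex.I)) *
          ∫ t in (0:ℝ)..1,
            (deriv f ((x₁ : ℂ) + y * Complex.I + t * ((x₂ : ℝ) - x₁))
                / f ((x₁ : ℂ) + y * Complex.I + t * ((x₂ : ℝ) - x₁)))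
              * (((x₂ : ℝ) - x₁ : ℝ) : ℂ)).re| ≤ C :=
  horizontal_log_integral_bounded_general H w hw f hf x₁ x₂ hx j
end
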